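/- Let (A, W, X, Y, Z) be random variables, let h* : 𝒜 × 𝒲 × 𝒳 → ℝ satisfy E[Y − h*(A, W, X) | A, X, Z] = 0 P_{A,X,Z}-almost surely, and let k : (𝒜 × 𝒳 × 𝒵)² → ℝ be a bounded measurable kernel. Then for every h with the relevant expectations defined, R_k(h) = d_k²(h*, h), where R_k(h) = E[(Y − h(A,W,X))(Y' − h(A',W',X')) k((A,X,Z),(A',X',Z'))] and d_k²(h, h') = E[(h(A,W,X) − h'(A,W,X))(h(A',W',X') − h'(A',W',X')) k((A,X,Z),(A',X',Z'))], with (A', W', X', Y', Z') an independent copy of (A, W, X, Y, Z). -/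

import Mathlib

open MeasureTheory Real Filter

noncomputable section

/-- Sign associated to a Boolean Rademacher coordinate. -/
def sgn (b : Bool) : ℝ := if b then 1 else -1

/-- Empirical Rademacher complexity of a class `G` on the sample `S`:
`R_S(G) = E_ε sup_{g ∈ G} (1/n) Σ_i ε_i g(S i)` with `ε` uniform on `{-1,1}^n`. -/
def empRad {X : Type*} {n : ℕ} (G : Set (X → ℝ)) (S : Fin n → X) : ℝ :=
  (∑ ε : Fin n → Bool,
      sSup ((fun g => (n : ℝ)⁻¹ * ∑ i, sgn (ε i) * g (S i)) '' G)) / 2 ^ n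

/-- Expected Rademacher complexity `R_m(G)` for an i.i.d. sample of size `m` from `μ`. -/
def expRad {X : Type*} [MeasurableSpace X] (μ : Measure X) (G : Set (X → ℝ)) (m : ℕ) : ℝ :=
  ∫ S : Fin m → X, empRad G S ∂(Measure.pi fun _ : Fin m => μ)

/-- The sample `S` with its `i`-th point removed. -/
def loo {X : Type*} {n : ℕ} (S : Fin n → X) (i : Fin n) : Fin (n - 1) → X :=
  fun j => if (j : ℕ) < (i : ℕ) then S ⟨j, by have := j.isLt; omega⟩
           else S ⟨(j : ℕ) + 1, by have := j.isLt; omega⟩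

/-- `R̂_{n-1,S}(G) = (1/n) Σ_i R_{S_{-i}}(G)`. -/
def avgLooRad {X : Type*} {n : ℕ} (G : Set (X → ℝ)) (S : Fin n → X) : ℝ :=
  (n : ℝ)⁻¹ * ∑ i : Fin n, empRad G (loo S i)

/-- `F₁ = {g | ∃ f ∈ F, x', g(x) = f(x', x) for all x}`. -/
def classF1 {X : Type*} (F : Set (X → X → ℝ)) : Set (X → ℝ) :=
  {g | ∃ f ∈ F, ∃ x' : X, ∀ x, g x = f x' x}

/-- `F₂ = {g | ∃ f ∈ F, x', g(x) = f(x, x') for all x}`. -/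
def classF2 {X : Type*} (F : Set (X → X → ℝ)) : Set (X → ℝ) :=
  {g | ∃ f ∈ F, ∃ x' : X, ∀ x, g x = f x x'}

/-- Pointwise class `F_{1,x} = {g | ∃ f ∈ F, g(x') = f(x, x') for all x'}`. -/
def classF1x {X : Type*} (F : Set (X → X → ℝ)) (x : X) : Set (X → ℝ) :=
  {g | ∃ f ∈ F, ∀ x', g x' = f x x'}

/-- Pointwise class `F_{2,x} = {g | ∃ f ∈ F, g(x') = f(x', x) for all x'}`. -/
def classF2x {X : Type*} (F : Set (X → X → ℝ)) (x : X) : Set (X → ℝ) :=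
  {g | ∃ f ∈ F, ∀ x', g x' = f x' x}

/-- U-statistic `Ê_S f = (1/(n(n-1))) Σ_{i ≠ j} f(x_i, x_j)`. -/
def ustat {X : Type*} {n : ℕ} (f : X → X → ℝ) (S : Fin n → X) : ℝ :=
  ((n : ℝ) * ((n : ℝ) - 1))⁻¹ * ∑ i, ∑ j, if i ≠ j then f (S i) (S j) else 0

/-- `E_{X,X'} f(X,X')` under two independent copies of `X ~ μ`. -/
def pairExp {X : Type*} [MeasurableSpace X] (μ : Measure X) (f : X → X → ℝ) : ℝ :=
  ∫ p : X × X, f p.1 p.2 ∂(μ.prod μ)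

/-!
Write `Y - h = u + v` with `u = Y - h*` and `v = h* - h`. Expanding the product in `R_k(h)`
gives `d_k²(h*, h)` plus three terms each carrying a factor `u` in one of the two independent
coordinates. Integrating out that coordinate first (Fubini), the remaining factor is a bounded
`σ(A, X, Z)`-measurable function of it, so the term vanishes by the moment condition
`E[u | A, X, Z] = 0`.
-/

theorem integral_mul_eq_zero_of_condExp_eq_zero {Ω : Type*} {m mΩ : MeasurableSpace Ω}
    {μ : Measure Ω} [IsFiniteMeasure μ] (hm : m ≤ mΩ) {f g : Ω → ℝ} {c : ℝ}
    (hf : StronglyMeasurable[m] f) (hf_bound : ∀ᵐ ω ∂μ, ‖f ω‖ ≤ c) (hg : Integrable g μ)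
    (hcond : μ[g | m] =ᵐ[μ] 0) :
    ∫ ω, f ω * g ω ∂μ = 0 :=
  calc ∫ ω, f ω * g ω ∂μ = ∫ ω, μ[f * g | m] ω ∂μ := (integral_condExp hm).symm
    _ = ∫ _, (0 : ℝ) ∂μ := integral_congr_ae <|
        (condExp_stronglyMeasurable_mul_of_bound hm hf hg c hf_bound).trans
          (hcond.mono fun ω hω => by simp [hω])
    _ = 0 := integral_zero _ _

section KernelPairing

variable {Ω β : Type*} [MeasurableSpace Ω] [MeasurableSpace β] {μ : Measure Ω}
  {T : Ω → β} {k : β → β → ℝ} {C : ℝ}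

theorem integrable_mul_mul_kernel_comp [SFinite μ] (hT : Measurable T)
    (hk : Measurable (Function.uncurry k)) (hkC : ∀ b b', |k b b'| ≤ C) {u w : Ω → ℝ}
    (hu : Integrable u μ) (hw : Integrable w μ) :
    Integrable (fun p : Ω × Ω => u p.1 * w p.2 * k (T p.1) (T p.2)) (μ.prod μ) :=
  (hu.mul_prod hw).mul_bdd
    (hk.comp ((hT.comp measurable_fst).prodMk (hT.comp measurable_snd))).aestronglyMeasurable
    (ae_of_all _ fun _ => (Real.norm_eq_abs _).trans_le (hkC _ _))

theorem integral_mul_mul_kernel_comp_eq_zero_left [IsFiniteMeasure μ] (hT : Measurable T)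
    (hk : Measurable (Function.uncurry k)) (hkC : ∀ b b', |k b b'| ≤ C) {u w : Ω → ℝ}
    (hu : Integrable u μ) (hcond : μ[u | MeasurableSpace.comap T inferInstance] =ᵐ[μ] 0)
    (hw : Integrable w μ) :
    ∫ p : Ω × Ω, u p.1 * w p.2 * k (T p.1) (T p.2) ∂(μ.prod μ) = 0 := by
  rw [integral_prod_symm _ (integrable_mul_mul_kernel_comp hT hk hkC hu hw)]
  have hslice : ∀ y, ∫ x, u x * w y * k (T x) (T y) ∂μ = 0 := fun y => by
    have hkT : StronglyMeasurable[MeasurableSpace.comap T inferInstance]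
        fun x => w y * k (T x) (T y) :=
      (measurable_const.mul ((hk.comp (measurable_id.prodMk measurable_const)).comp
        (comap_measurable T))).stronglyMeasurable
    have hbound : ∀ᵐ x ∂μ, ‖w y * k (T x) (T y)‖ ≤ |w y| * C := ae_of_all _ fun x => by
      rw [Real.norm_eq_abs, abs_mul]
      exact mul_le_mul_of_nonneg_left (hkC _ _) (abs_nonneg _)
    simpa only [mul_comm, mul_left_comm] using
      integral_mul_eq_zero_of_condExp_eq_zero hT.comap_le hkT hbound hu hcond
  simp only [hslice, integral_zero]

theorem integral_mul_mul_kernel_comp_eq_zero_right [IsFiniteMeasure μ] (hT : Measurable T)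
    (hk : Measurable (Function.uncurry k)) (hkC : ∀ b b', |k b b'| ≤ C) {u w : Ω → ℝ}
    (hu : Integrable u μ) (hcond : μ[u | MeasurableSpace.comap T inferInstance] =ᵐ[μ] 0)
    (hw : Integrable w μ) :
    ∫ p : Ω × Ω, w p.1 * u p.2 * k (T p.1) (T p.2) ∂(μ.prod μ) = 0 := by
  rw [← integral_prod_swap]
  simpa only [Prod.fst_swap, Prod.snd_swap, flip, mul_comm (w _)] using
    integral_mul_mul_kernel_comp_eq_zero_left (k := flip k) hT (hk.comp measurable_swap)
      (fun b b' => hkC b' b) hu hcond hw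

theorem integral_add_mul_add_mul_kernel_comp [IsFiniteMeasure μ] (hT : Measurable T)
    (hk : Measurable (Function.uncurry k)) (hkC : ∀ b b', |k b b'| ≤ C) {u v : Ω → ℝ}
    (hu : Integrable u μ) (hcond : μ[u | MeasurableSpace.comap T inferInstance] =ᵐ[μ] 0)
    (hv : Integrable v μ) :
    ∫ p : Ω × Ω, (u p.1 + v p.1) * (u p.2 + v p.2) * k (T p.1) (T p.2) ∂(μ.prod μ) =
      ∫ p : Ω × Ω, v p.1 * v p.2 * k (T p.1) (T p.2) ∂(μ.prod μ) := by
  have hI : ∀ {f g : Ω → ℝ}, Integrable f μ → Integrable g μ →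
      Integrable (fun p : Ω × Ω => f p.1 * g p.2 * k (T p.1) (T p.2)) (μ.prod μ) :=
    integrable_mul_mul_kernel_comp hT hk hkC
  have hexpand : ∀ p : Ω × Ω, (u p.1 + v p.1) * (u p.2 + v p.2) * k (T p.1) (T p.2) =
      (u p.1 * (u + v) p.2 * k (T p.1) (T p.2) + v p.1 * u p.2 * k (T p.1) (T p.2)) +
        v p.1 * v p.2 * k (T p.1) (T p.2) := fun p => by
    simp only [Pi.add_apply]; ring
  simp_rw [hexpand]
  have hcross : Integrable (fun p : Ω × Ω =>
      u p.1 * (u + v) p.2 * k (T p.1) (T p.2) + v p.1 * u p.2 * k (T p.1) (T p.2)) (μ.prod μ) :=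
    (hI hu (hu.add hv)).add (hI hv hu)
  rw [integral_add hcross (hI hv hv), integral_add (hI hu (hu.add hv)) (hI hv hu),
    integral_mul_mul_kernel_comp_eq_zero_left hT hk hkC hu hcond (hu.add hv),
    integral_mul_mul_kernel_comp_eq_zero_right hT hk hkC hu hcond hv, zero_add, zero_add]

end KernelPairing

theorem stmt14_general {Ω A W Xt Z : Type*}
    [MeasurableSpace Ω] [MeasurableSpace A] [MeasurableSpace W]
    [MeasurableSpace Xt] [MeasurableSpace Z]
    (μ : Measure Ω) [IsProbabilityMeasure μ]
    (Av : Ω → A) (Wv : Ω → W) (Xv : Ω → Xt) (Yv : Ω → ℝ) (Zv : Ω → Z)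
    (hAv : Measurable Av) (hXv : Measurable Xv) (hZv : Measurable Zv)
    (hstar h : A → W → Xt → ℝ)
    (k : A × Xt × Z → A × Xt × Z → ℝ) (Mk : ℝ)
    (hkmeas : Measurable (Function.uncurry k)) (hkbd : ∀ p q, |k p q| ≤ Mk)
    (hY2 : MemLp Yv 2 μ)
    (hh2 : MemLp (fun ω => h (Av ω) (Wv ω) (Xv ω)) 2 μ)
    (hs2 : MemLp (fun ω => hstar (Av ω) (Wv ω) (Xv ω)) 2 μ)
    (hmom : μ[(fun ω => Yv ω - hstar (Av ω) (Wv ω) (Xv ω)) |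
        MeasurableSpace.comap (fun ω => (Av ω, Xv ω, Zv ω)) inferInstance] =ᵐ[μ] 0) :
    (∫ p : Ω × Ω,
        (Yv p.1 - h (Av p.1) (Wv p.1) (Xv p.1)) *
          (Yv p.2 - h (Av p.2) (Wv p.2) (Xv p.2)) *
          k (Av p.1, Xv p.1, Zv p.1) (Av p.2, Xv p.2, Zv p.2) ∂(μ.prod μ)) =
      ∫ p : Ω × Ω,
        (hstar (Av p.1) (Wv p.1) (Xv p.1) - h (Av p.1) (Wv p.1) (Xv p.1)) *
          (hstar (Av p.2) (Wv p.2) (Xv p.2) - h (Av p.2) (Wv p.2) (Xv p.2)) *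
          k (Av p.1, Xv p.1, Zv p.1) (Av p.2, Xv p.2, Zv p.2) ∂(μ.prod μ) := by
  have hT : Measurable fun ω => (Av ω, Xv ω, Zv ω) := hAv.prodMk (hXv.prodMk hZv)
  have hu : Integrable (fun ω => Yv ω - hstar (Av ω) (Wv ω) (Xv ω)) μ :=
    (hY2.sub hs2).integrable one_le_two
  have hv : Integrable (fun ω => hstar (Av ω) (Wv ω) (Xv ω) - h (Av ω) (Wv ω) (Xv ω)) μ :=
    (hs2.sub hh2).integrable one_le_two
  simpa only [sub_add_sub_cancel] using
    integral_add_mul_add_mul_kernel_comp hT hkmeas hkbd hu hmom hv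

/-- if `E[Y − h*(A,W,X) | A,X,Z] = 0` a.s. then, for all `h` with the
relevant expectations defined, `R_k(h) = d_k²(h*, h)`, where the independent copy
`(A',W',X',Y',Z')` is realised as the second coordinate of the product space `Ω × Ω`. -/
theorem stmt14 {Ω A W Xt Z : Type*}
    [MeasurableSpace Ω] [MeasurableSpace A] [MeasurableSpace W]
    [MeasurableSpace Xt] [MeasurableSpace Z]
    (μ : Measure Ω) [IsProbabilityMeasure μ]
    (Av : Ω → A) (Wv : Ω → W) (Xv : Ω → Xt) (Yv : Ω → ℝ) (Zv : Ω → Z)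
    (hAv : Measurable Av) (hWv : Measurable Wv) (hXv : Measurable Xv)
    (hYv : Measurable Yv) (hZv : Measurable Zv)
    (hstar h : A → W → Xt → ℝ)
    (k : A × Xt × Z → A × Xt × Z → ℝ) (Mk : ℝ)
    (hkmeas : Measurable (Function.uncurry k)) (hkbd : ∀ p q, |k p q| ≤ Mk)
    (hmeas_h : Measurable fun ω => h (Av ω) (Wv ω) (Xv ω))
    (hmeas_hstar : Measurable fun ω => hstar (Av ω) (Wv ω) (Xv ω))
    (hY2 : MemLp Yv 2 μ)
    (hh2 : MemLp (fun ω => h (Av ω) (Wv ω) (Xv ω)) 2 μ)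
    (hs2 : MemLp (fun ω => hstar (Av ω) (Wv ω) (Xv ω)) 2 μ)
    (hmom : μ[(fun ω => Yv ω - hstar (Av ω) (Wv ω) (Xv ω)) |
        MeasurableSpace.comap (fun ω => (Av ω, Xv ω, Zv ω)) inferInstance] =ᵐ[μ] 0) :
    (∫ p : Ω × Ω,
        (Yv p.1 - h (Av p.1) (Wv p.1) (Xv p.1)) *
          (Yv p.2 - h (Av p.2) (Wv p.2) (Xv p.2)) *
          k (Av p.1, Xv p.1, Zv p.1) (Av p.2, Xv p.2, Zv p.2) ∂(μ.prod μ)) =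
      ∫ p : Ω × Ω,
        (hstar (Av p.1) (Wv p.1) (Xv p.1) - h (Av p.1) (Wv p.1) (Xv p.1)) *
          (hstar (Av p.2) (Wv p.2) (Xv p.2) - h (Av p.2) (Wv p.2) (Xv p.2)) *
          k (Av p.1, Xv p.1, Zv p.1) (Av p.2, Xv p.2, Zv p.2) ∂(μ.prod μ) :=
  stmt14_general μ Av Wv Xv Yv Zv hAv hXv hZv hstar h k Mk hkmeas hkbd hY2 hh2 hs2 hmom

end
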